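/- Under the hypotheses of the E-WQH switching theorem (vertex partition C_1 ∪ C_2 ∪ D with |C_1| = |C_2| = t, each edge meeting C_1 ∪ C_2 in at most one vertex, and each (k-1)-subset of D having neighbourhood in C_1 ∪ C_2 equal to C_1, C_2, or equinumerous in both), the switched hypergraph H and G have adjacency tensors with the same E-characteristic polynomial; in particular, 𝒜_H = Q 𝒜_G Qᵀ for a real orthogonal matrix Q, so G and H are E-cospectral. -/

import Mathlib

/-!
Write the vertex set as `(ι ⊕ ι) ⊕ β`, the left summand being `C₁ ∪ C₂` and `β` being `D`.
Then `Q = B ⊕ 1` with `B = [[1 - J/t, J/t], [J/t, 1 - J/t]]`, an orthogonal involution since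
`J/t` is a symmetric idempotent. Because `Q` fixes `D` pointwise and every edge meets `C₁ ∪ C₂`
at most once, the entry of `Q 𝒜_G Qᵀ` at a tuple `i` vanishes as soon as two coordinates of `i`
lie in `C₁ ∪ C₂`, equals `𝒜_G i` if none does, and if exactly the coordinate `s₀` does, with the
others forming a `(k-1)`-set `S ⊆ D`, it equals `1/(k-1)!` times the `i s₀`-row of `B` summed
over `Γ(S) ∩ (C₁ ∪ C₂)`. That row sum is the indicator of `Γ(S)` when `Γ(S)` meets `C₁` and `C₂`
equally often, and of its complement in `C₁ ∪ C₂` when `Γ(S) ∩ (C₁ ∪ C₂)` is `C₁` or `C₂`: this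
is exactly the switching rule, so `Q 𝒜_G Qᵀ = 𝒜_H`, and orthogonal invariance of the
E-characteristic polynomial concludes.
-/

open Matrix Finset Function Sum

section TensorTransform

variable {R V : Type*} [CommSemiring R] [Fintype V] {k : ℕ}

/-- The tensor `M A Mᵀ` of the paper, for an order-`k` tensor `A`. -/
def tensorTransform (M : Matrix V V R) (A : (Fin k → V) → R) (i : Fin k → V) : R :=
  ∑ j, A j * ∏ s, M (i s) (j s)

theorem tensorTransform_eq_zero {M : Matrix V V R} {A : (Fin k → V) → R} {i : Fin k → V}
    (h : ∀ j, (∀ s, M (i s) (j s) ≠ 0) → A j = 0) : tensorTransform M A i = 0 := by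
  refine sum_eq_zero fun j _ => ?_
  by_cases hj : ∀ s, M (i s) (j s) ≠ 0
  · rw [h j hj, zero_mul]
  · push Not at hj
    obtain ⟨s, hs⟩ := hj
    rw [prod_eq_zero (mem_univ s) hs, mul_zero]

variable [DecidableEq V]

theorem tensorTransform_of_forall_row_eq_single {M : Matrix V V R} (A : (Fin k → V) → R)
    {i : Fin k → V} (h : ∀ s, M (i s) = Pi.single (i s) 1) : tensorTransform M A i = A i := by
  rw [tensorTransform, Fintype.sum_eq_single i]
  · simp [h]
  · intro j hj
    obtain ⟨s, hs⟩ := Function.ne_iff.1 hj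
    rw [prod_eq_zero (mem_univ s) (by simp [h, hs]), mul_zero]

theorem tensorTransform_of_row_eq_single_of_ne {M : Matrix V V R} (A : (Fin k → V) → R)
    {i : Fin k → V} (s₀ : Fin k) (h : ∀ s ≠ s₀, M (i s) = Pi.single (i s) 1) :
    tensorTransform M A i = ∑ w, A (update i s₀ w) * M (i s₀) w := by
  refine (Fintype.sum_of_injective _ (update_injective i s₀) _ _ ?_ fun w => ?_).symm
  · intro j hj
    obtain ⟨s, hs₀, hs⟩ : ∃ s ≠ s₀, j s ≠ i s := by
      by_contra! hji
      exact hj ⟨j s₀, funext fun s => by by_cases hs : s = s₀ <;> simp [hs, hji]⟩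
    rw [prod_eq_zero (mem_univ s) (by simp [h s hs₀, hs]), mul_zero]
  · rw [Fintype.prod_eq_single s₀ fun s hs => by simp [h s hs, hs]]
    simp

end TensorTransform

section BlockMatrix

variable {R α β : Type*}

theorem fromBlocks_zero_zero_one_mul_transpose [Fintype α] [Fintype β] [DecidableEq α]
    [DecidableEq β] [CommRing R] {B : Matrix α α R} (hB : B * Bᵀ = 1) :
    fromBlocks B 0 0 (1 : Matrix β β R) * (fromBlocks B 0 0 1)ᵀ = 1 := by
  simp [fromBlocks_transpose, fromBlocks_multiply, hB]

theorem isLeft_eq_of_fromBlocks_zero_zero_ne_zero [Zero R] {A : Matrix α α R}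
    {D : Matrix β β R} {v w : α ⊕ β} (h : fromBlocks A 0 0 D v w ≠ 0) : v.isLeft = w.isLeft := by
  rcases v with _ | _ <;> rcases w with _ | _ <;> simp_all

theorem fromBlocks_zero_zero_one_apply_inr [DecidableEq α] [DecidableEq β] [Semiring R]
    (A : Matrix α α R) (b : β) :
    (fromBlocks A 0 0 1 : Matrix (α ⊕ β) (α ⊕ β) R) (inr b) = Pi.single (inr b) 1 := by
  ext (_ | _) <;> simp [one_apply, Pi.single_apply, eq_comm]

end BlockMatrix

section SwitchingBlock

variable {ι : Type*} [Fintype ι]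

noncomputable def averagingMatrix (ι : Type*) [Fintype ι] : Matrix ι ι ℝ :=
  (Fintype.card ι : ℝ)⁻¹ • of fun _ _ => 1

theorem averagingMatrix_transpose : (averagingMatrix ι)ᵀ = averagingMatrix ι := by
  ext; simp [averagingMatrix]

theorem isIdempotentElem_averagingMatrix [Nonempty ι] :
    IsIdempotentElem (averagingMatrix ι) := by
  ext a b
  simp [averagingMatrix, mul_apply]

variable [DecidableEq ι]

def switchingBlock {R : Type*} [Ring R] (P : Matrix ι ι R) : Matrix (ι ⊕ ι) (ι ⊕ ι) R :=
  fromBlocks (1 - P) P P (1 - P)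

theorem switchingBlock_mul_transpose {R : Type*} [CommRing R] {P : Matrix ι ι R}
    (hP : IsIdempotentElem P) (hPt : Pᵀ = P) : switchingBlock P * (switchingBlock P)ᵀ = 1 := by
  rw [switchingBlock, fromBlocks_transpose, fromBlocks_multiply, ← fromBlocks_one]
  simp only [transpose_sub, transpose_one, hPt, sub_mul, mul_sub, one_mul, mul_one, hP.eq]
  congr 1 <;> abel

theorem sum_disjSum_switchingBlock_inl (s t : Finset ι) (a : ι) :
    ∑ c ∈ s.disjSum t, switchingBlock (averagingMatrix ι) (inl a) c
      = (if a ∈ s then 1 else 0) + (#t - #s) / Fintype.card ι := by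
  simp [switchingBlock, averagingMatrix, sum_disjSum, Matrix.sub_apply, one_apply, sum_sub_distrib]
  ring

theorem sum_disjSum_switchingBlock_inr (s t : Finset ι) (a : ι) :
    ∑ c ∈ s.disjSum t, switchingBlock (averagingMatrix ι) (inr a) c
      = (if a ∈ t then 1 else 0) + (#s - #t) / Fintype.card ι := by
  simp [switchingBlock, averagingMatrix, sum_disjSum, Matrix.sub_apply, one_apply, sum_sub_distrib]
  ring

theorem sum_switchingBlock {W : Finset (ι ⊕ ι)}
    (h : W = univ.disjSum ∅ ∨ W = (∅ : Finset ι).disjSum univ ∨ #W.toLeft = #W.toRight)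
    (c : ι ⊕ ι) :
    ∑ c' ∈ W, switchingBlock (averagingMatrix ι) c c'
      = if Xor (c ∈ W) (W = univ.disjSum ∅ ∨ W = (∅ : Finset ι).disjSum univ) then 1 else 0 := by
  have hcard : (Fintype.card ι : ℝ) ≠ 0 := by
    have : Nonempty ι := c.elim (⟨·⟩) (⟨·⟩)
    positivity
  by_cases hside : W = univ.disjSum ∅ ∨ W = (∅ : Finset ι).disjSum univ
  · rcases hside with rfl | rfl <;> rcases c with a | a <;>
      simp only [sum_disjSum_switchingBlock_inl, sum_disjSum_switchingBlock_inr] <;>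
      simp [hcard, Xor]
  · have hst : #W.toLeft = #W.toRight := (h.resolve_left fun h' => hside (.inl h')).resolve_left
      fun h' => hside (.inr h')
    simp only [Xor, hside, and_true, not_false_eq_true]
    rw [← toLeft_disjSum_toRight (u := W)]
    rcases c with a | a <;>
      simp only [sum_disjSum_switchingBlock_inl, sum_disjSum_switchingBlock_inr] <;>
      simp [hst]

end SwitchingBlock

section Hypergraph

variable {V : Type*} [DecidableEq V] {k : ℕ}

noncomputable def adjTensor (k : ℕ) (G : Finset (Finset V)) (i : Fin k → V) : ℝ :=
  if Injective i ∧ univ.image i ∈ G then (1 : ℝ) / (Nat.factorial (k - 1)) else 0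

def nbhd [Fintype V] (G : Finset (Finset V)) (S : Finset V) : Finset V :=
  Finset.univ.filter (fun u => u ∉ S ∧ insert u S ∈ G)

theorem adjTensor_eq_zero_of_not_injective {G : Finset (Finset V)} {i : Fin k → V}
    (h : ¬ Injective i) : adjTensor k G i = 0 :=
  if_neg fun h' => h h'.1

theorem image_update_univ (i : Fin k → V) (s₀ : Fin k) (w : V) :
    univ.image (update i s₀ w) = insert w ((univ.erase s₀).image i) := by
  rw [← insert_erase (mem_univ s₀), image_insert, update_self, erase_insert (notMem_erase _ _)]
  exact congrArg _ (image_congr fun s hs => update_of_ne (ne_of_mem_erase hs) _ _)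

theorem injective_update_of_notMem {i : Fin k → V} (hi : Injective i) {s₀ : Fin k} {w : V}
    (hw : w ∉ (univ.erase s₀).image i) : Injective (update i s₀ w) := by
  have hw' : ∀ s ≠ s₀, i s ≠ w := fun s hs h =>
    hw (mem_image.2 ⟨s, mem_erase.2 ⟨hs, mem_univ s⟩, h⟩)
  intro s s' h
  by_cases hs : s = s₀ <;> by_cases hs' : s' = s₀
  · rw [hs, hs']
  · subst hs
    simp only [update_self, update_of_ne hs'] at h
    exact absurd h.symm (hw' s' hs')
  · subst hs'
    simp only [update_self, update_of_ne hs] at h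
    exact absurd h (hw' s hs)
  · exact hi (by simpa only [update_of_ne hs, update_of_ne hs'] using h)

theorem adjTensor_update {G : Finset (Finset V)} {i : Fin k → V} (hi : Injective i) {s₀ : Fin k}
    {w : V} (hw : w ∉ (univ.erase s₀).image i) :
    adjTensor k G (update i s₀ w)
      = if insert w ((univ.erase s₀).image i) ∈ G then (1 : ℝ) / (Nat.factorial (k - 1))
        else 0 := by
  simp [adjTensor, injective_update_of_notMem hi hw, image_update_univ]

variable {α β : Type*} [DecidableEq α] [DecidableEq β]

theorem adjTensor_eq_zero_of_isLeft {G : Finset (Finset (α ⊕ β))} (hG : ∀ e ∈ G, #e.toLeft ≤ 1)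
    {i : Fin k → α ⊕ β} {s s' : Fin k} (hss' : s ≠ s') (hs : (i s).isLeft)
    (hs' : (i s').isLeft) : adjTensor k G i = 0 := by
  refine if_neg fun ⟨hi, he⟩ => ?_
  obtain ⟨a, ha⟩ := isLeft_iff.1 hs
  obtain ⟨a', ha'⟩ := isLeft_iff.1 hs'
  have hne : a ≠ a' := fun h => hss' (hi (by rw [ha, ha', h]))
  have hsub : {a, a'} ⊆ (univ.image i).toLeft := by
    intro x hx
    rcases mem_insert.1 hx with rfl | hx
    · simpa using ⟨s, ha⟩
    · rw [mem_singleton.1 hx]; simpa using ⟨s', ha'⟩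
  have := (card_le_card hsub).trans (hG _ he)
  rw [card_pair hne] at this
  omega

theorem mem_toLeft_nbhd [Fintype α] [Fintype β] {G : Finset (Finset (α ⊕ β))}
    {S : Finset (α ⊕ β)} (hS : S.toLeft = ∅) (a : α) :
    a ∈ (nbhd G S).toLeft ↔ insert (inl a) S ∈ G := by
  have : inl a ∉ S := fun h => notMem_empty a (hS ▸ mem_toLeft.2 h)
  simp [nbhd, this]

theorem eq_of_insert_inl_eq_insert_inl {S S' : Finset (α ⊕ β)} (hS : S.toLeft = ∅)
    (hS' : S'.toLeft = ∅) {a a' : α} (h : insert (inl a) S = insert (inl a') S') : S = S' := by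
  rw [← toLeft_disjSum_toRight (u := S), ← toLeft_disjSum_toRight (u := S'), hS, hS']
  simpa using congrArg toRight h

end Hypergraph

section BlockDiagonalTransform

variable {α β : Type*} [Fintype α] [DecidableEq α] [DecidableEq β] {k : ℕ}

theorem adjTensor_eq_sum_update_of_isRight_of_ne (B : Matrix α α ℝ)
    {G H : Finset (Finset (α ⊕ β))}
    (hrow : ∀ S : Finset (α ⊕ β), S.toLeft = ∅ → #S = k - 1 → ∀ a,
      (if insert (inl a) S ∈ H then 1 else 0)
        = ∑ a', (if insert (inl a') S ∈ G then 1 else 0) * B a a')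
    {i : Fin k → α ⊕ β} {s₀ : Fin k} {a : α} (hs₀ : i s₀ = inl a)
    (h : ∀ s ≠ s₀, (i s).isRight) :
    adjTensor k H i = ∑ a', adjTensor k G (update i s₀ (inl a')) * B a a' := by
  by_cases hi : Injective i
  · set S := (univ.erase s₀).image i
    have hS : S.toLeft = ∅ := by
      ext a'
      simp only [S, mem_toLeft, mem_image, mem_erase, notMem_empty, iff_false, not_exists]
      rintro s ⟨⟨hs, -⟩, hsa⟩
      simpa [hsa] using h s hs
    have hSk : #S = k - 1 := by simp [S, card_image_of_injective _ hi]
    have hnotMem : ∀ a', inl a' ∉ S := fun a' ha' => notMem_empty a' (hS ▸ mem_toLeft.2 ha')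
    conv_lhs => rw [← update_eq_self s₀ i, hs₀, adjTensor_update hi (hnotMem a)]
    simp only [adjTensor_update hi (hnotMem _)]
    have := congrArg ((1 : ℝ) / (Nat.factorial (k - 1)) * ·) (hrow S hS hSk a)
    simpa [mul_sum, ← mul_assoc] using this
  · obtain ⟨s, s', hss, hss'⟩ : ∃ s s', i s = i s' ∧ s ≠ s' := by
      simpa [Injective, not_forall] using hi
    -- the repeated value lies in `D`, so it survives every update at `s₀`
    have hs : s ≠ s₀ := by rintro rfl; simpa [← hss, hs₀] using h s' (Ne.symm hss')
    have hs' : s' ≠ s₀ := by rintro rfl; simpa [hss, hs₀] using h s hss'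
    rw [adjTensor_eq_zero_of_not_injective hi]
    refine (sum_eq_zero fun a' _ => ?_).symm
    rw [adjTensor_eq_zero_of_not_injective fun hinj => hss' (hinj (by simp [hs, hs', hss])),
      zero_mul]

variable [Fintype β]

theorem tensorTransform_fromBlocks_of_isRight_of_ne (B : Matrix α α ℝ)
    (A : (Fin k → α ⊕ β) → ℝ) {i : Fin k → α ⊕ β} {s₀ : Fin k} {a : α} (hs₀ : i s₀ = inl a)
    (h : ∀ s ≠ s₀, (i s).isRight) :
    tensorTransform (fromBlocks B 0 0 1) A i = ∑ a', A (update i s₀ (inl a')) * B a a' := by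
  rw [tensorTransform_of_row_eq_single_of_ne A s₀ fun s hs => ?_, Fintype.sum_sum_type]
  · simp [hs₀]
  · obtain ⟨b, hb⟩ := isRight_iff.1 (h s hs)
    rw [hb, fromBlocks_zero_zero_one_apply_inr]

theorem adjTensor_eq_tensorTransform_fromBlocks (B : Matrix α α ℝ)
    {G H : Finset (Finset (α ⊕ β))} (hG : ∀ e ∈ G, #e.toLeft ≤ 1) (hH : ∀ e ∈ H, #e.toLeft ≤ 1)
    (hD : ∀ e : Finset (α ⊕ β), e.toLeft = ∅ → (e ∈ H ↔ e ∈ G))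
    (hrow : ∀ S : Finset (α ⊕ β), S.toLeft = ∅ → #S = k - 1 → ∀ a,
      (if insert (inl a) S ∈ H then 1 else 0)
        = ∑ a', (if insert (inl a') S ∈ G then 1 else 0) * B a a') :
    adjTensor k H = tensorTransform (fromBlocks B 0 0 1) (adjTensor k G) := by
  funext i
  by_cases hright : ∀ s, (i s).isRight
  · rw [tensorTransform_of_forall_row_eq_single _ fun s => ?_]
    · have : (univ.image i).toLeft = ∅ := by
        ext a
        simpa using fun s h => by simpa [h] using hright s
      simp only [adjTensor, hD _ this]
    · obtain ⟨b, hb⟩ := isRight_iff.1 (hright s)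
      rw [hb, fromBlocks_zero_zero_one_apply_inr]
  obtain ⟨s₀, hs₀⟩ := not_forall.1 hright
  obtain ⟨a, ha⟩ := isLeft_iff.1 (not_isRight.1 hs₀)
  have hs₀l : (i s₀).isLeft := by simp [ha]
  by_cases hleft : ∃ s ≠ s₀, (i s).isLeft
  · obtain ⟨s, hs, hsl⟩ := hleft
    rw [adjTensor_eq_zero_of_isLeft hH hs hsl hs₀l]
    exact (tensorTransform_eq_zero fun _ hj => adjTensor_eq_zero_of_isLeft hG hs
      (isLeft_eq_of_fromBlocks_zero_zero_ne_zero (hj s) ▸ hsl)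
      (isLeft_eq_of_fromBlocks_zero_zero_ne_zero (hj s₀) ▸ hs₀l)).symm
  · have hright' : ∀ s ≠ s₀, (i s).isRight := fun s hs => not_isLeft.1 fun h => hleft ⟨s, hs, h⟩
    rw [tensorTransform_fromBlocks_of_isRight_of_ne B _ ha hright',
      adjTensor_eq_sum_update_of_isRight_of_ne B hrow ha hright']

end BlockDiagonalTransform

section Switching

variable {ι β : Type*} [Fintype ι] [DecidableEq ι] [Fintype β] [DecidableEq β] {k : ℕ}

theorem adjTensor_eq_tensorTransform_switchingBlock {G H : Finset (Finset ((ι ⊕ ι) ⊕ β))}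
    (Sw : Finset ((ι ⊕ ι) ⊕ β) → Prop) (hG1 : ∀ e ∈ G, #e.toLeft ≤ 1)
    (hG2 : ∀ S : Finset ((ι ⊕ ι) ⊕ β), S.toLeft = ∅ → #S = k - 1 →
      (nbhd G S).toLeft = univ.disjSum ∅ ∨ (nbhd G S).toLeft = (∅ : Finset ι).disjSum univ ∨
        #(nbhd G S).toLeft.toLeft = #(nbhd G S).toLeft.toRight)
    (hSw : ∀ e, Sw e ↔ ∃ v : (ι ⊕ ι) ⊕ β, v.isLeft ∧ ∃ S, S.toLeft = ∅ ∧ #S = k - 1 ∧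
      e = insert v S ∧
        ((nbhd G S).toLeft = univ.disjSum ∅ ∨ (nbhd G S).toLeft = (∅ : Finset ι).disjSum univ))
    (hH : ∀ e, e ∈ H ↔ Xor (e ∈ G) (Sw e)) :
    adjTensor k H =
      tensorTransform (fromBlocks (switchingBlock (averagingMatrix ι)) 0 0 1) (adjTensor k G) := by
  have hSw_eq : ∀ e, Sw e → ∃ a S, S.toLeft = ∅ ∧ e = insert (inl a) S := by
    intro e he
    obtain ⟨v, hv, S, hS, -, rfl, -⟩ := (hSw e).1 he
    obtain ⟨a, rfl⟩ := isLeft_iff.1 hv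
    exact ⟨a, S, hS, rfl⟩
  refine adjTensor_eq_tensorTransform_fromBlocks _ hG1 (fun e he => ?_) (fun e he => ?_)
    fun S hS hSk a => ?_
  · rcases (hH e).1 he with ⟨heG, -⟩ | ⟨hsw, -⟩
    · exact hG1 e heG
    · obtain ⟨a, S, hS, rfl⟩ := hSw_eq e hsw
      simp [hS]
  · have : ¬ Sw e := fun hsw => by
      obtain ⟨a, S, -, rfl⟩ := hSw_eq e hsw
      simp at he
    simp [hH, Xor, this]
  · have hsw : Sw (insert (inl a) S) ↔ (nbhd G S).toLeft = univ.disjSum ∅ ∨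
        (nbhd G S).toLeft = (∅ : Finset ι).disjSum univ := by
      rw [hSw]
      constructor
      · rintro ⟨v, hv, S', hS', -, heq, hside⟩
        obtain ⟨a', rfl⟩ := isLeft_iff.1 hv
        obtain rfl := eq_of_insert_inl_eq_insert_inl hS hS' heq
        exact hside
      · exact fun hside => ⟨inl a, rfl, S, hS, hSk, rfl, hside⟩
    simp only [← mem_toLeft_nbhd (G := G) hS, ite_mul, one_mul, zero_mul, sum_ite_mem, univ_inter]
    rw [sum_switchingBlock (hG2 S hS hSk)]
    exact if_congr (by rw [hH, hsw, mem_toLeft_nbhd hS]) rfl rfl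

end Switching

section Encoding

variable {ι β : Type*} [Fintype ι] [DecidableEq ι] [DecidableEq β]

theorem mem_image_inl_inl_union_image_inl_inr {v : (ι ⊕ ι) ⊕ β} :
    v ∈ (univ.image fun a => (inl (inl a) : (ι ⊕ ι) ⊕ β)) ∪ univ.image (fun a => inl (inr a))
      ↔ v.isLeft := by
  rcases v with (a | a) | b <;> simp

theorem subset_image_inr_iff {α : Type*} [DecidableEq α] [Fintype β] {S : Finset (α ⊕ β)} :
    S ⊆ univ.image (fun b => (inr b : α ⊕ β)) ↔ S.toLeft = ∅ := by
  simp [toLeft_eq_empty, subset_iff]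

theorem card_inter_image_inl_inl_union_image_inl_inr (X : Finset ((ι ⊕ ι) ⊕ β)) :
    #(X ∩ ((univ.image fun a => (inl (inl a) : (ι ⊕ ι) ⊕ β)) ∪ univ.image (fun a => inl (inr a))))
      = #X.toLeft := by
  rw [← card_image_of_injective X.toLeft (inl_injective (β := β))]
  congr 1; ext ((a | a) | b) <;> simp

theorem card_inter_image_inl_inl (X : Finset ((ι ⊕ ι) ⊕ β)) :
    #(X ∩ univ.image fun a => (inl (inl a) : (ι ⊕ ι) ⊕ β)) = #X.toLeft.toLeft := by
  rw [← card_image_of_injective X.toLeft.toLeft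
    ((inl_injective (β := β)).comp (inl_injective (β := ι)))]
  congr 1; ext ((a | a) | b) <;> simp

theorem card_inter_image_inl_inr (X : Finset ((ι ⊕ ι) ⊕ β)) :
    #(X ∩ univ.image fun a => (inl (inr a) : (ι ⊕ ι) ⊕ β)) = #X.toLeft.toRight := by
  rw [← card_image_of_injective X.toLeft.toRight
    ((inl_injective (β := β)).comp (inr_injective (α := ι)))]
  congr 1; ext ((a | a) | b) <;> simp

theorem inter_image_union_eq_image_inl_inl_iff (X : Finset ((ι ⊕ ι) ⊕ β)) :
    X ∩ ((univ.image fun a => (inl (inl a) : (ι ⊕ ι) ⊕ β)) ∪ univ.image (fun a => inl (inr a)))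
      = univ.image (fun a => inl (inl a)) ↔ X.toLeft = univ.disjSum ∅ := by
  simp only [Finset.ext_iff]
  constructor
  · rintro h (a | a)
    · simpa using h (inl (inl a))
    · simpa using h (inl (inr a))
  · rintro h ((a | a) | b)
    · simpa using h (inl a)
    · simpa using h (inr a)
    · simp

theorem inter_image_union_eq_image_inl_inr_iff (X : Finset ((ι ⊕ ι) ⊕ β)) :
    X ∩ ((univ.image fun a => (inl (inl a) : (ι ⊕ ι) ⊕ β)) ∪ univ.image (fun a => inl (inr a)))
      = univ.image (fun a => inl (inr a)) ↔ X.toLeft = (∅ : Finset ι).disjSum univ := by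
  simp only [Finset.ext_iff]
  constructor
  · rintro h (a | a)
    · simpa using h (inl (inl a))
    · simpa using h (inl (inr a))
  · rintro h ((a | a) | b)
    · simpa using h (inl a)
    · simpa using h (inr a)
    · simp

end Encoding

theorem EWQH_switching_E_cospectral_general (k t d : ℕ) (ht : 1 ≤ t)
    (G H : Finset (Finset ((Fin t ⊕ Fin t) ⊕ Fin d)))
    (C₁ C₂ D : Finset ((Fin t ⊕ Fin t) ⊕ Fin d))
    (hC₁ : C₁ = Finset.univ.image
      (fun a : Fin t => (Sum.inl (Sum.inl a) : (Fin t ⊕ Fin t) ⊕ Fin d)))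
    (hC₂ : C₂ = Finset.univ.image
      (fun a : Fin t => (Sum.inl (Sum.inr a) : (Fin t ⊕ Fin t) ⊕ Fin d)))
    (hD : D = Finset.univ.image
      (fun b : Fin d => (Sum.inr b : (Fin t ⊕ Fin t) ⊕ Fin d)))
    -- every edge has at most one vertex in C₁ ∪ C₂
    (hG1 : ∀ e ∈ G, (e ∩ (C₁ ∪ C₂)).card ≤ 1)
    -- N S is the neighbourhood Γ(S) in G
    (N : Finset ((Fin t ⊕ Fin t) ⊕ Fin d) → Finset ((Fin t ⊕ Fin t) ⊕ Fin d))
    (hN : ∀ S, N S = Finset.univ.filter (fun u => u ∉ S ∧ insert u S ∈ G))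
    -- neighbourhood condition for (k-1)-subsets of D
    (hG2 : ∀ S ⊆ D, S.card = k - 1 →
      (N S ∩ (C₁ ∪ C₂) = C₁ ∨ N S ∩ (C₁ ∪ C₂) = C₂ ∨
        (N S ∩ C₁).card = (N S ∩ C₂).card))
    -- Sw e: the k-set e is one whose adjacency is switched
    (Sw : Finset ((Fin t ⊕ Fin t) ⊕ Fin d) → Prop)
    (hSw : ∀ e, Sw e ↔ ∃ v ∈ C₁ ∪ C₂, ∃ S ⊆ D, S.card = k - 1 ∧ e = insert v S ∧
      (N S ∩ (C₁ ∪ C₂) = C₁ ∨ N S ∩ (C₁ ∪ C₂) = C₂))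
    -- H is obtained from G by the switching
    (hH : ∀ e, e ∈ H ↔ ((e ∈ G ∧ ¬ Sw e) ∨ (e ∉ G ∧ Sw e)))
    (J : Matrix (Fin t) (Fin t) ℝ) (hJ : ∀ a b, J a b = 1)
    (Q : Matrix ((Fin t ⊕ Fin t) ⊕ Fin d) ((Fin t ⊕ Fin t) ⊕ Fin d) ℝ)
    (hQ : Q = fromBlocks
      (fromBlocks (1 - (t : ℝ)⁻¹ • J) ((t : ℝ)⁻¹ • J) ((t : ℝ)⁻¹ • J) (1 - (t : ℝ)⁻¹ • J))
      0 0 1)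
    -- adjacency tensors of G and H
    (AG AH : (Fin k → (Fin t ⊕ Fin t) ⊕ Fin d) → ℝ)
    (hAG : ∀ i, AG i = if Function.Injective i ∧ Finset.image i Finset.univ ∈ G
      then (1 : ℝ) / (Nat.factorial (k - 1)) else 0)
    (hAH : ∀ i, AH i = if Function.Injective i ∧ Finset.image i Finset.univ ∈ H
      then (1 : ℝ) / (Nat.factorial (k - 1)) else 0)
    -- E-characteristic polynomial of order-k tensors, assumed invariant under
    -- conjugation by real orthogonal matrices (Lemma of Shao / Li-Qi-Zhang)
    (Echar : ((Fin k → (Fin t ⊕ Fin t) ⊕ Fin d) → ℝ) → Polynomial ℝ)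
    (hEchar : ∀ (A : (Fin k → (Fin t ⊕ Fin t) ⊕ Fin d) → ℝ)
      (R : Matrix ((Fin t ⊕ Fin t) ⊕ Fin d) ((Fin t ⊕ Fin t) ⊕ Fin d) ℝ),
      R * Rᵀ = 1 →
      Echar (fun i => ∑ j : Fin k → (Fin t ⊕ Fin t) ⊕ Fin d, A j * ∏ s, R (i s) (j s))
        = Echar A) :
    (∀ i : Fin k → (Fin t ⊕ Fin t) ⊕ Fin d,
      AH i = ∑ j : Fin k → (Fin t ⊕ Fin t) ⊕ Fin d, AG j * ∏ s, Q (i s) (j s)) ∧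
    Q * Qᵀ = 1 ∧ Echar AH = Echar AG := by
  subst hC₁ hC₂ hD
  obtain rfl : N = nbhd G := funext hN
  obtain rfl : J = of fun _ _ => 1 := Matrix.ext hJ
  obtain rfl : AG = adjTensor k G := funext hAG
  obtain rfl : AH = adjTensor k H := funext hAH
  have hQ' : Q = fromBlocks (switchingBlock (averagingMatrix (Fin t))) 0 0 1 := by
    rw [hQ, averagingMatrix, Fintype.card_fin]; rfl
  have : Nonempty (Fin t) := ⟨⟨0, ht⟩⟩
  have hQQ : Q * Qᵀ = 1 := hQ' ▸ fromBlocks_zero_zero_one_mul_transpose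
    (switchingBlock_mul_transpose isIdempotentElem_averagingMatrix averagingMatrix_transpose)
  have htensor : adjTensor k H = tensorTransform Q (adjTensor k G) := by
    rw [hQ']
    refine adjTensor_eq_tensorTransform_switchingBlock Sw (fun e he => ?_) (fun S hS hSk => ?_)
      (fun e => ?_) fun e => (hH e).trans (or_congr_right and_comm)
    · simpa only [card_inter_image_inl_inl_union_image_inl_inr] using hG1 e he
    · simpa only [inter_image_union_eq_image_inl_inl_iff, inter_image_union_eq_image_inl_inr_iff,
        card_inter_image_inl_inl, card_inter_image_inl_inr]
        using hG2 S (subset_image_inr_iff.2 hS) hSk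
    · simpa only [mem_image_inl_inl_union_image_inl_inr, subset_image_inr_iff,
        inter_image_union_eq_image_inl_inl_iff, inter_image_union_eq_image_inl_inr_iff] using hSw e
  exact ⟨congrFun htensor, hQQ, htensor ▸ hEchar _ Q hQQ⟩

/-- E-WQH switching: the adjacency tensor of the switched hypergraph H equals the
conjugation of the adjacency tensor of G by the orthogonal block matrix Q. -/
theorem EWQH_switching_E_cospectral (k t d : ℕ) (hk : 2 ≤ k) (ht : 1 ≤ t)
    (G H : Finset (Finset ((Fin t ⊕ Fin t) ⊕ Fin d)))
    (C₁ C₂ D : Finset ((Fin t ⊕ Fin t) ⊕ Fin d))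
    (hC₁ : C₁ = Finset.univ.image
      (fun a : Fin t => (Sum.inl (Sum.inl a) : (Fin t ⊕ Fin t) ⊕ Fin d)))
    (hC₂ : C₂ = Finset.univ.image
      (fun a : Fin t => (Sum.inl (Sum.inr a) : (Fin t ⊕ Fin t) ⊕ Fin d)))
    (hD : D = Finset.univ.image
      (fun b : Fin d => (Sum.inr b : (Fin t ⊕ Fin t) ⊕ Fin d)))
    -- G is k-uniform
    (hGk : ∀ e ∈ G, e.card = k)
    -- every edge has at most one vertex in C₁ ∪ C₂
    (hG1 : ∀ e ∈ G, (e ∩ (C₁ ∪ C₂)).card ≤ 1)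
    -- N S is the neighbourhood Γ(S) in G
    (N : Finset ((Fin t ⊕ Fin t) ⊕ Fin d) → Finset ((Fin t ⊕ Fin t) ⊕ Fin d))
    (hN : ∀ S, N S = Finset.univ.filter (fun u => u ∉ S ∧ insert u S ∈ G))
    -- neighbourhood condition for (k-1)-subsets of D
    (hG2 : ∀ S ⊆ D, S.card = k - 1 →
      (N S ∩ (C₁ ∪ C₂) = C₁ ∨ N S ∩ (C₁ ∪ C₂) = C₂ ∨
        (N S ∩ C₁).card = (N S ∩ C₂).card))
    -- Sw e: the k-set e is one whose adjacency is switched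
    (Sw : Finset ((Fin t ⊕ Fin t) ⊕ Fin d) → Prop)
    (hSw : ∀ e, Sw e ↔ ∃ v ∈ C₁ ∪ C₂, ∃ S ⊆ D, S.card = k - 1 ∧ e = insert v S ∧
      (N S ∩ (C₁ ∪ C₂) = C₁ ∨ N S ∩ (C₁ ∪ C₂) = C₂))
    -- H is obtained from G by the switching
    (hH : ∀ e, e ∈ H ↔ ((e ∈ G ∧ ¬ Sw e) ∨ (e ∉ G ∧ Sw e)))
    (J : Matrix (Fin t) (Fin t) ℝ) (hJ : ∀ a b, J a b = 1)
    (Q : Matrix ((Fin t ⊕ Fin t) ⊕ Fin d) ((Fin t ⊕ Fin t) ⊕ Fin d) ℝ)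
    (hQ : Q = fromBlocks
      (fromBlocks (1 - (t : ℝ)⁻¹ • J) ((t : ℝ)⁻¹ • J) ((t : ℝ)⁻¹ • J) (1 - (t : ℝ)⁻¹ • J))
      0 0 1)
    -- adjacency tensors of G and H
    (AG AH : (Fin k → (Fin t ⊕ Fin t) ⊕ Fin d) → ℝ)
    (hAG : ∀ i, AG i = if Function.Injective i ∧ Finset.image i Finset.univ ∈ G
      then (1 : ℝ) / (Nat.factorial (k - 1)) else 0)
    (hAH : ∀ i, AH i = if Function.Injective i ∧ Finset.image i Finset.univ ∈ H
      then (1 : ℝ) / (Nat.factorial (k - 1)) else 0)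
    -- E-characteristic polynomial of order-k tensors, assumed invariant under
    -- conjugation by real orthogonal matrices (Lemma of Shao / Li-Qi-Zhang)
    (Echar : ((Fin k → (Fin t ⊕ Fin t) ⊕ Fin d) → ℝ) → Polynomial ℝ)
    (hEchar : ∀ (A : (Fin k → (Fin t ⊕ Fin t) ⊕ Fin d) → ℝ)
      (R : Matrix ((Fin t ⊕ Fin t) ⊕ Fin d) ((Fin t ⊕ Fin t) ⊕ Fin d) ℝ),
      R * Rᵀ = 1 →
      Echar (fun i => ∑ j : Fin k → (Fin t ⊕ Fin t) ⊕ Fin d, A j * ∏ s, R (i s) (j s))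
        = Echar A) :
    (∀ i : Fin k → (Fin t ⊕ Fin t) ⊕ Fin d,
      AH i = ∑ j : Fin k → (Fin t ⊕ Fin t) ⊕ Fin d, AG j * ∏ s, Q (i s) (j s)) ∧
    Q * Qᵀ = 1 ∧ Echar AH = Echar AG :=
  EWQH_switching_E_cospectral_general k t d ht G H C₁ C₂ D hC₁ hC₂ hD hG1 N hN hG2 Sw hSw hH J hJ Q
    hQ AG AH hAG hAH Echar hEchar
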